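/- Let $1 < p < \infty$ and let $J : \mathbb{R}^n \to \mathbb{R}$, $J(v) = \frac{\lambda}{p}|v|^p$ with $\lambda \ge 0$. Suppose $v_k \rightharpoonup v$ and $\psi_k := \lambda|v_k|^{p-2}v_k \rightharpoonup \chi$ weakly in $L^p$ resp. $L^{p'}$ on a finite measure space, and $\limsup_k \int \psi_k \cdot v_k \le \int \chi \cdot v$. Then $\chi = \lambda |v|^{p-2} v$ almost everywhere. -/

import Mathlib

/-!
Monotonicity of `Ψ a = λ‖a‖^(p-2) a` gives `∫ (ψ_k - Ψ w)·(v_k - w) ≥ 0` for every test field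
`w ∈ L^p`; the weak convergences and the limsup hypothesis turn this into Minty's inequality
`∫ (χ - Ψ w)·(v - w) ≥ 0`. Passing the limsup through the inequality needs `∫ ψ_k·v_k = λ‖v_k‖_p^p`
bounded above (a real `limsup` of an unbounded sequence is a junk value); this follows from the
uniform boundedness principle for the weakly convergent `ψ_k`. Minty's trick then tests with
`w = v + tφ`, where `φ = h/(1+|h|)` is a bounded version of `h = χ - Ψ v`: dividing by `t` and
letting `t → 0±` (dominated convergence) gives `∫ h·φ = 0`, so `h = 0` a.e.
-/

open MeasureTheory Filter

variable {Ω : Type*} [MeasurableSpace Ω]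

/-- `u k ⇀ ul` weakly in `L^r(Ω; ℝⁿ)` (pairings against the conjugate space
`L^{r'}`, `r' = r/(r-1)`, converge). -/
def WeakLrTendsto {n : ℕ} (μ : Measure Ω) (r : ℝ)
    (u : ℕ → Ω → EuclideanSpace ℝ (Fin n)) (ul : Ω → EuclideanSpace ℝ (Fin n)) : Prop :=
  ∀ φ : Ω → EuclideanSpace ℝ (Fin n), MemLp φ (ENNReal.ofReal (r / (r - 1))) μ →
    Tendsto (fun k => ∫ x, (inner ℝ (u k x) (φ x) : ℝ) ∂μ) atTop
      (nhds (∫ x, (inner ℝ (ul x) (φ x) : ℝ) ∂μ))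

open Topology
open scoped RealInnerProductSpace

lemma mul_rpow_le_of_mul_rpow_le_mul {p lam M N : ℝ} (hp : 1 < p) (hlam : 0 ≤ lam) (hM : 0 ≤ M)
    (hN : 0 ≤ N) (h : lam * N ^ p ≤ M * N) : lam * N ^ p ≤ M * (M / lam) ^ (p - 1)⁻¹ := by
  rcases hlam.eq_or_lt with rfl | hlam
  · rw [zero_mul]; positivity
  rcases hN.eq_or_lt with rfl | hN
  · rw [Real.zero_rpow (by linarith), mul_zero]; positivity
  have hpow : N ^ (p - 1) ≤ M / lam := by
    rw [le_div_iff₀ hlam, ← mul_le_mul_iff_of_pos_right hN, mul_right_comm,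
      ← Real.rpow_add_one hN.ne']
    simpa [mul_comm] using h
  have hbound : N ≤ (M / lam) ^ (p - 1)⁻¹ :=
    (Real.le_rpow_inv_iff_of_pos hN.le (by positivity) (by linarith)).mpr hpow
  exact h.trans (mul_le_mul_of_nonneg_left hbound hM)

lemma eq_zero_of_forall_mul_nonpos {f : ℝ → ℝ} (hf : ContinuousAt f 0) (h : ∀ t, t * f t ≤ 0) :
    f 0 = 0 := by
  refine le_antisymm ?_ ?_
  · refine le_of_tendsto (hf.tendsto.mono_left (nhdsWithin_le_nhds (s := Set.Ioi 0)))
      (eventually_nhdsWithin_of_forall fun t (ht : 0 < t) => ?_)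
    exact nonpos_of_mul_nonpos_right (h t) ht
  · refine ge_of_tendsto (hf.tendsto.mono_left (nhdsWithin_le_nhds (s := Set.Iio 0)))
      (eventually_nhdsWithin_of_forall fun t (ht : t < 0) => ?_)
    exact nonneg_of_mul_nonpos_right (h t) ht

section PowNormSmul

variable {F : Type*} [NormedAddCommGroup F] [InnerProductSpace ℝ F] {p : ℝ}

noncomputable def powNormSmul (p : ℝ) (a : F) : F := ‖a‖ ^ (p - 2) • a

lemma norm_powNormSmul (hp : p ≠ 1) (a : F) : ‖powNormSmul p a‖ = ‖a‖ ^ (p - 1) := by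
  rcases eq_or_ne a 0 with rfl | ha
  · simp [powNormSmul, Real.zero_rpow (sub_ne_zero.mpr hp)]
  · rw [powNormSmul, norm_smul, Real.norm_of_nonneg (by positivity),
      ← Real.rpow_add_one (norm_ne_zero_iff.mpr ha)]
    ring_nf

lemma real_inner_powNormSmul_self (hp : p ≠ 0) (a : F) :
    ⟪powNormSmul p a, a⟫ = ‖a‖ ^ p := by
  rcases eq_or_ne a 0 with rfl | ha
  · simp [Real.zero_rpow hp]
  · rw [powNormSmul, real_inner_smul_left, real_inner_self_eq_norm_sq, ← Real.rpow_natCast,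
      ← Real.rpow_add (norm_pos_iff.mpr ha)]
    norm_num

lemma real_inner_powNormSmul_sub_nonneg (hp : 1 < p) (a b : F) :
    0 ≤ ⟪powNormSmul p a - powNormSmul p b, a - b⟫ := by
  have hsplit (c : F) : ‖c‖ ^ p = ‖c‖ ^ (p - 1) * ‖c‖ := by
    rw [← Real.rpow_add_one' (norm_nonneg c) (by linarith)]; ring_nf
  have hab : ⟪powNormSmul p a, b⟫ ≤ ‖a‖ ^ (p - 1) * ‖b‖ :=
    (real_inner_le_norm _ _).trans_eq (by rw [norm_powNormSmul hp.ne'])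
  have hba : ⟪powNormSmul p b, a⟫ ≤ ‖b‖ ^ (p - 1) * ‖a‖ :=
    (real_inner_le_norm _ _).trans_eq (by rw [norm_powNormSmul hp.ne'])
  have hmono : 0 ≤ (‖a‖ ^ (p - 1) - ‖b‖ ^ (p - 1)) * (‖a‖ - ‖b‖) := by
    rcases le_total ‖a‖ ‖b‖ with h | h
    · exact mul_nonneg_of_nonpos_of_nonpos
        (sub_nonpos.mpr (Real.rpow_le_rpow (norm_nonneg a) h (by linarith))) (sub_nonpos.mpr h)
    · exact mul_nonneg
        (sub_nonneg.mpr (Real.rpow_le_rpow (norm_nonneg b) h (by linarith))) (sub_nonneg.mpr h)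
  rw [inner_sub_left, inner_sub_right, inner_sub_right, real_inner_powNormSmul_self (by linarith),
    real_inner_powNormSmul_self (by linarith), hsplit a, hsplit b]
  nlinarith

lemma continuous_powNormSmul (hp : 1 < p) : Continuous (powNormSmul p : F → F) := by
  refine continuous_iff_continuousAt.mpr fun a => ?_
  rcases eq_or_ne a 0 with rfl | ha
  · have hnorm : Tendsto (fun c : F => ‖c‖ ^ (p - 1)) (𝓝 0) (𝓝 0) := by
      simpa [Real.zero_rpow (by linarith : p - 1 ≠ 0)] using
        (continuous_norm.rpow_const fun _ => Or.inr (by linarith : 0 ≤ p - 1)).tendsto (0 : F)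
    simpa [ContinuousAt, powNormSmul] using
      squeeze_zero_norm (fun c => (norm_powNormSmul hp.ne' c).le) hnorm
  · exact ((continuous_norm.continuousAt.rpow_const (Or.inl (norm_ne_zero_iff.mpr ha))).smul
      continuousAt_id)

end PowNormSmul

section LpPairing

variable {μ : Measure Ω} {p q : ℝ}

lemma MeasureTheory.MemLp.norm_rpow_sub_one {E : Type*} [NormedAddCommGroup E]
    (hpq : p.HolderConjugate q) {f : Ω → E}
    (hf : MemLp f (ENNReal.ofReal p) μ) :
    MemLp (fun x => ‖f x‖ ^ (p - 1)) (ENNReal.ofReal q) μ := by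
  have h := hf.norm_rpow_div (ENNReal.ofReal (p - 1))
  rwa [ENNReal.toReal_ofReal hpq.sub_one_pos.le, ← ENNReal.ofReal_div_of_pos hpq.sub_one_pos,
    ← hpq.conjugate_eq] at h

variable {F : Type*} [NormedAddCommGroup F] [InnerProductSpace ℝ F]

lemma MeasureTheory.MemLp.powNormSmul (hpq : p.HolderConjugate q) {f : Ω → F}
    (hf : MemLp f (ENNReal.ofReal p) μ) :
    MemLp (fun x => powNormSmul p (f x)) (ENNReal.ofReal q) μ :=
  (hf.norm_rpow_sub_one hpq).of_le_mul (c := 1)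
    ((continuous_powNormSmul hpq.lt).comp_aestronglyMeasurable hf.1)
    (Eventually.of_forall fun x => by
      rw [norm_powNormSmul hpq.lt.ne', Real.norm_of_nonneg (by positivity), one_mul])

lemma MeasureTheory.MemLp.integrable_inner (hpq : p.HolderConjugate q) {f g : Ω → F}
    (hf : MemLp f (ENNReal.ofReal p) μ) (hg : MemLp g (ENNReal.ofReal q) μ) :
    Integrable (fun x => ⟪f x, g x⟫) μ :=
  have := hpq.ennrealOfReal
  memLp_one_iff_integrable.mp ((innerSL ℝ).memLp_of_bilin 1 hf hg)

lemma integral_inner_sub_sub (hpq : p.HolderConjugate q) {a b c d : Ω → F}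
    (ha : MemLp a (ENNReal.ofReal q) μ) (hb : MemLp b (ENNReal.ofReal q) μ)
    (hc : MemLp c (ENNReal.ofReal p) μ) (hd : MemLp d (ENNReal.ofReal p) μ) :
    ∫ x, ⟪a x - b x, c x - d x⟫ ∂μ =
      (∫ x, ⟪a x, c x⟫ ∂μ) - (∫ x, ⟪a x, d x⟫ ∂μ) -
        ((∫ x, ⟪b x, c x⟫ ∂μ) - ∫ x, ⟪b x, d x⟫ ∂μ) := by
  have hac := ha.integrable_inner hpq.symm hc
  have had := ha.integrable_inner hpq.symm hd
  have hbc := hb.integrable_inner hpq.symm hc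
  have hbd := hb.integrable_inner hpq.symm hd
  simp_rw [inner_sub_left, inner_sub_right]
  rw [integral_sub, integral_sub hac had, integral_sub hbc hbd]
  exacts [hac.sub had, hbc.sub hbd]

lemma exists_abs_integral_inner_le_of_forall_tendsto [CompleteSpace F]
    (hpq : p.HolderConjugate q) {ψ : ℕ → Ω → F} (hψ : ∀ k, MemLp (ψ k) (ENNReal.ofReal q) μ)
    (hconv : ∀ φ : Ω → F, MemLp φ (ENNReal.ofReal p) μ →
      ∃ L, Tendsto (fun k => ∫ x, ⟪ψ k x, φ x⟫ ∂μ) atTop (𝓝 L)) :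
    ∃ M, 0 ≤ M ∧ ∀ k, ∀ φ : Ω → F, MemLp φ (ENNReal.ofReal p) μ →
      |∫ x, ⟪ψ k x, φ x⟫ ∂μ| ≤ M * lpNorm φ (ENNReal.ofReal p) μ := by
  have := hpq.symm.ennrealOfReal
  have : Fact (1 ≤ ENNReal.ofReal p) := ⟨ENNReal.one_le_ofReal.mpr hpq.lt.le⟩
  have : Fact (1 ≤ ENNReal.ofReal q) := ⟨ENNReal.one_le_ofReal.mpr hpq.symm.lt.le⟩
  let S k := (innerSL ℝ).lpPairing μ (ENNReal.ofReal q) (ENNReal.ofReal p) ((hψ k).toLp (ψ k))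
  have hS k (φ : Ω → F) (hφ : MemLp φ (ENNReal.ofReal p) μ) :
      S k (hφ.toLp φ) = ∫ x, ⟪ψ k x, φ x⟫ ∂μ := by
    rw [ContinuousLinearMap.lpPairing_eq_integral]
    exact integral_congr_ae (((hψ k).coeFn_toLp).mp (hφ.coeFn_toLp.mono fun x h₁ h₂ => by
      simp only [h₁, h₂]; rfl))
  obtain ⟨M, hM⟩ := banach_steinhaus (g := S) fun φ => by
    obtain ⟨L, hL⟩ := hconv φ (Lp.memLp φ)
    have hSφ : Tendsto (fun k => ‖S k φ‖) atTop (𝓝 ‖L‖) :=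
      hL.norm.congr fun k => by rw [← hS k φ (Lp.memLp φ), Lp.toLp_coeFn]
    obtain ⟨C, hC⟩ := hSφ.bddAbove_range
    exact ⟨C, fun k => hC (Set.mem_range_self k)⟩
  refine ⟨max M 0, le_max_right _ _, fun k φ hφ => ?_⟩
  calc |∫ x, ⟪ψ k x, φ x⟫ ∂μ| = ‖S k (hφ.toLp φ)‖ := by rw [hS k φ hφ, Real.norm_eq_abs]
    _ ≤ ‖S k‖ * ‖hφ.toLp φ‖ := (S k).le_opNorm _
    _ ≤ max M 0 * lpNorm φ (ENNReal.ofReal p) μ := by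
      rw [Lp.norm_toLp, toReal_eLpNorm hφ.1]
      exact mul_le_mul_of_nonneg_right ((hM k).trans (le_max_left _ _)) lpNorm_nonneg

lemma integral_inner_smul_powNormSmul_self (hp : 0 < p) (lam : ℝ) {v : Ω → F}
    (hv : AEStronglyMeasurable v μ) :
    ∫ x, ⟪lam • powNormSmul p (v x), v x⟫ ∂μ = lam * lpNorm v (ENNReal.ofReal p) μ ^ p := by
  simp_rw [real_inner_smul_left, real_inner_powNormSmul_self hp.ne']
  rw [integral_const_mul, lpNorm_eq_integral_norm_rpow_toReal (by simpa using hp) (by simp) hv,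
    ENNReal.toReal_ofReal hp.le, ← Real.rpow_mul (integral_nonneg fun x => by positivity),
    inv_mul_cancel₀ hp.ne', Real.rpow_one]

end LpPairing

section Minty

variable {F : Type*} [NormedAddCommGroup F] [InnerProductSpace ℝ F] {μ : Measure Ω} {p q : ℝ}

lemma integral_inner_sub_nonneg_of_limsup_le (hpq : p.HolderConjugate q) {Φ : F → F}
    (hΦ : ∀ a b, 0 ≤ ⟪Φ a - Φ b, a - b⟫) {v : ℕ → Ω → F} {u χ w : Ω → F}
    (hv : ∀ k, MemLp (v k) (ENNReal.ofReal p) μ)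
    (hΦv : ∀ k, MemLp (fun x => Φ (v k x)) (ENNReal.ofReal q) μ)
    (hu : MemLp u (ENNReal.ofReal p) μ) (hχ : MemLp χ (ENNReal.ofReal q) μ)
    (hw : MemLp w (ENNReal.ofReal p) μ) (hΦw : MemLp (fun x => Φ (w x)) (ENNReal.ofReal q) μ)
    (hΦv_w : Tendsto (fun k => ∫ x, ⟪Φ (v k x), w x⟫ ∂μ) atTop (𝓝 (∫ x, ⟪χ x, w x⟫ ∂μ)))
    (hv_Φw : Tendsto (fun k => ∫ x, ⟪v k x, Φ (w x)⟫ ∂μ) atTop (𝓝 (∫ x, ⟪u x, Φ (w x)⟫ ∂μ)))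
    (hbdd : IsBoundedUnder (· ≤ ·) atTop fun k => ∫ x, ⟪Φ (v k x), v k x⟫ ∂μ)
    (hlimsup : limsup (fun k => ∫ x, ⟪Φ (v k x), v k x⟫ ∂μ) atTop ≤ ∫ x, ⟪χ x, u x⟫ ∂μ) :
    0 ≤ ∫ x, ⟪χ x - Φ (w x), u x - w x⟫ ∂μ := by
  replace hv_Φw : Tendsto (fun k => ∫ x, ⟪Φ (w x), v k x⟫ ∂μ) atTop
      (𝓝 (∫ x, ⟪Φ (w x), u x⟫ ∂μ)) := by
    simpa only [real_inner_comm] using hv_Φw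
  set L := (∫ x, ⟪χ x, w x⟫ ∂μ) + ((∫ x, ⟪Φ (w x), u x⟫ ∂μ) - ∫ x, ⟪Φ (w x), w x⟫ ∂μ)
  have hlower k : (∫ x, ⟪Φ (v k x), w x⟫ ∂μ) +
      ((∫ x, ⟪Φ (w x), v k x⟫ ∂μ) - ∫ x, ⟪Φ (w x), w x⟫ ∂μ) ≤ ∫ x, ⟪Φ (v k x), v k x⟫ ∂μ := by
    have h : 0 ≤ ∫ x, ⟪Φ (v k x) - Φ (w x), v k x - w x⟫ ∂μ :=
      integral_nonneg fun x => hΦ (v k x) (w x)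
    rw [integral_inner_sub_sub hpq (hΦv k) hΦw (hv k) hw] at h
    linarith
  have hL : L ≤ limsup (fun k => ∫ x, ⟪Φ (v k x), v k x⟫ ∂μ) atTop := by
    have hconv : Tendsto (fun k => (∫ x, ⟪Φ (v k x), w x⟫ ∂μ) +
        ((∫ x, ⟪Φ (w x), v k x⟫ ∂μ) - ∫ x, ⟪Φ (w x), w x⟫ ∂μ)) atTop (𝓝 L) :=
      hΦv_w.add (hv_Φw.sub tendsto_const_nhds)
    rw [← hconv.limsup_eq]
    exact limsup_le_limsup (Eventually.of_forall hlower)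
      hconv.isBoundedUnder_ge.isCoboundedUnder_le hbdd
  rw [integral_inner_sub_sub hpq hχ hΦw hu hw]
  linarith

lemma continuousAt_integral_inner_sub_smul_powNormSmul [IsFiniteMeasure μ]
    (hpq : p.HolderConjugate q) (lam : ℝ) {χ u φ : Ω → F} (hχ : MemLp χ (ENNReal.ofReal q) μ)
    (hu : MemLp u (ENNReal.ofReal p) μ) (hφm : AEStronglyMeasurable φ μ) (hφ : ∀ x, ‖φ x‖ ≤ 1) :
    ContinuousAt (fun t : ℝ => ∫ x, ⟪χ x - lam • powNormSmul p (u x + t • φ x), φ x⟫ ∂μ) 0 := by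
  have hq : 1 ≤ ENNReal.ofReal q := ENNReal.one_le_ofReal.mpr hpq.symm.lt.le
  have hcont : Continuous (powNormSmul p : F → F) := continuous_powNormSmul hpq.lt
  refine continuousAt_of_dominated
    (bound := fun x => ‖χ x‖ + ‖lam‖ * (‖u x‖ + 1) ^ (p - 1)) ?_ ?_ ?_ ?_
  · exact Eventually.of_forall fun t =>
      (hχ.1.sub ((hcont.comp_aestronglyMeasurable (hu.1.add (hφm.const_smul t))).const_smul
        lam)).inner hφm
  · filter_upwards [Metric.closedBall_mem_nhds (0 : ℝ) one_pos] with t ht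
    refine Eventually.of_forall fun x => ?_
    have ht : ‖t‖ ≤ 1 := by simpa using ht
    have hshift : ‖u x + t • φ x‖ ≤ ‖u x‖ + 1 := (norm_add_le _ _).trans (by
      grw [norm_smul, ht, hφ x, one_mul])
    calc ‖⟪χ x - lam • powNormSmul p (u x + t • φ x), φ x⟫‖
        ≤ ‖χ x - lam • powNormSmul p (u x + t • φ x)‖ * 1 :=
          (norm_inner_le_norm _ _).trans (by gcongr; exact hφ x)
      _ ≤ ‖χ x‖ + ‖lam‖ * (‖u x‖ + 1) ^ (p - 1) := by
          rw [mul_one]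
          refine (norm_sub_le _ _).trans ?_
          rw [norm_smul, norm_powNormSmul hpq.lt.ne']
          gcongr
          linarith [hpq.lt]
  · have hgrowth : MemLp (fun x => (‖u x‖ + 1) ^ (p - 1)) (ENNReal.ofReal q) μ := by
      convert (hu.norm.add (memLp_const 1)).norm_rpow_sub_one hpq using 3 with x
      exact (Real.norm_of_nonneg (by positivity)).symm
    exact (hχ.integrable hq).norm.add ((hgrowth.integrable hq).const_mul _)
  · exact Eventually.of_forall fun x => ((continuous_const.sub ((hcont.comp
      (continuous_const.add (continuous_id.smul continuous_const))).const_smul lam)).inner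
        continuous_const).continuousAt

lemma ae_eq_zero_of_integral_inner_smul_eq_zero {h : Ω → F}
    (hint : Integrable (fun x => ⟪h x, (1 + ‖h x‖)⁻¹ • h x⟫) μ)
    (hzero : ∫ x, ⟪h x, (1 + ‖h x‖)⁻¹ • h x⟫ ∂μ = 0) : h =ᵐ[μ] 0 := by
  have hpt x : ⟪h x, (1 + ‖h x‖)⁻¹ • h x⟫ = (1 + ‖h x‖)⁻¹ * ‖h x‖ ^ 2 := by
    rw [real_inner_smul_right, real_inner_self_eq_norm_sq]
  have hnonneg : 0 ≤ fun x => ⟪h x, (1 + ‖h x‖)⁻¹ • h x⟫ := fun x => by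
    simp only [Pi.zero_apply, hpt]; positivity
  filter_upwards [(integral_eq_zero_iff_of_nonneg hnonneg hint).mp hzero] with x hx
  rw [Pi.zero_apply, hpt, mul_eq_zero, inv_eq_zero] at hx
  rcases hx with hx | hx
  · exact absurd hx (by positivity)
  · simpa using hx

lemma ae_eq_smul_powNormSmul_of_forall_integral_inner_sub_nonneg [IsFiniteMeasure μ]
    (hpq : p.HolderConjugate q) (lam : ℝ) {χ u : Ω → F} (hχ : MemLp χ (ENNReal.ofReal q) μ)
    (hu : MemLp u (ENNReal.ofReal p) μ)
    (hminty : ∀ w : Ω → F, MemLp w (ENNReal.ofReal p) μ →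
      0 ≤ ∫ x, ⟪χ x - lam • powNormSmul p (w x), u x - w x⟫ ∂μ) :
    χ =ᵐ[μ] fun x => lam • powNormSmul p (u x) := by
  set h := fun x => χ x - lam • powNormSmul p (u x)
  have hh : MemLp h (ENNReal.ofReal q) μ := hχ.sub ((hu.powNormSmul hpq).const_smul lam)
  set φ := fun x => (1 + ‖h x‖)⁻¹ • h x
  have hφm : AEStronglyMeasurable φ μ :=
    (hh.1.norm.const_add 1).aemeasurable.inv.aestronglyMeasurable.smul hh.1
  have hφ x : ‖φ x‖ ≤ 1 := by
    rw [norm_smul, norm_inv, Real.norm_of_nonneg (by positivity), inv_mul_le_one₀ (by positivity)]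
    linarith
  have hφp : MemLp φ (ENNReal.ofReal p) μ := .of_bound hφm 1 (Eventually.of_forall hφ)
  have hsign (t : ℝ) :
      t * ∫ x, ⟪χ x - lam • powNormSmul p (u x + t • φ x), φ x⟫ ∂μ ≤ 0 := by
    have h := hminty _ (hu.add (hφp.const_smul t))
    simp_rw [Pi.add_apply, Pi.smul_apply, sub_add_cancel_left, inner_neg_right,
      real_inner_smul_right, integral_neg, integral_const_mul] at h
    linarith
  have hJ := eq_zero_of_forall_mul_nonpos
    (continuousAt_integral_inner_sub_smul_powNormSmul hpq lam hχ hu hφm hφ) hsign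
  simp only [zero_smul, add_zero] at hJ
  filter_upwards [ae_eq_zero_of_integral_inner_smul_eq_zero (hh.integrable_inner hpq.symm hφp) hJ]
    with x hx
  exact sub_eq_zero.mp hx

end Minty

/-- Minty–Browder monotonicity trick for the operator `v ↦ λ|v|^{p-2}v`
(`λ ≥ 0` constant): if `v_k ⇀ v` in `L^p`, `ψ_k := λ|v_k|^{p-2}v_k ⇀ χ` in `L^{p'}`,
and `limsup ∫ ψ_k ⋅ v_k ≤ ∫ χ ⋅ v`, then `χ = λ|v|^{p-2}v` a.e. -/
theorem stmt18 (n : ℕ) (p lam : ℝ) (hp : 1 < p) (hlam : 0 ≤ lam)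
    (μ : Measure Ω) [IsFiniteMeasure μ]
    (v : ℕ → Ω → EuclideanSpace ℝ (Fin n)) (vlim : Ω → EuclideanSpace ℝ (Fin n))
    (hvk : ∀ k, MemLp (v k) (ENNReal.ofReal p) μ) (hvl : MemLp vlim (ENNReal.ofReal p) μ)
    (hvweak : WeakLrTendsto μ p v vlim)
    (χ : Ω → EuclideanSpace ℝ (Fin n)) (hχ : MemLp χ (ENNReal.ofReal (p / (p - 1))) μ)
    (hψweak : WeakLrTendsto μ (p / (p - 1))
      (fun k x => lam • (‖v k x‖ ^ (p - 2) • v k x)) χ)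
    (hlimsup : limsup
        (fun k => ∫ x, (inner ℝ (lam • (‖v k x‖ ^ (p - 2) • v k x)) (v k x) : ℝ) ∂μ)
        atTop ≤ ∫ x, (inner ℝ (χ x) (vlim x) : ℝ) ∂μ) :
    ∀ᵐ x ∂μ, χ x = lam • (‖vlim x‖ ^ (p - 2) • vlim x) := by
  have hpq : p.HolderConjugate (p / (p - 1)) :=
    (Real.holderConjugate_iff_eq_conjExponent hp).mpr rfl
  have hΦ (a b : EuclideanSpace ℝ (Fin n)) :
      0 ≤ ⟪lam • powNormSmul p a - lam • powNormSmul p b, a - b⟫ := by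
    rw [← smul_sub, real_inner_smul_left]
    exact mul_nonneg hlam (real_inner_powNormSmul_sub_nonneg hp a b)
  have hΦv k : MemLp (fun x => lam • powNormSmul p (v k x)) (ENNReal.ofReal (p / (p - 1))) μ :=
    ((hvk k).powNormSmul hpq).const_smul lam
  have hψ φ (hφ : MemLp φ (ENNReal.ofReal p) μ) :
      Tendsto (fun k => ∫ x, ⟪lam • powNormSmul p (v k x), φ x⟫ ∂μ) atTop
        (𝓝 (∫ x, ⟪χ x, φ x⟫ ∂μ)) :=
    hψweak φ (by rwa [← hpq.symm.conjugate_eq])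
  obtain ⟨M, hM0, hM⟩ :=
    exists_abs_integral_inner_le_of_forall_tendsto hpq hΦv fun φ hφ => ⟨_, hψ φ hφ⟩
  have hbdd : IsBoundedUnder (· ≤ ·) atTop
      fun k => ∫ x, ⟪lam • powNormSmul p (v k x), v k x⟫ ∂μ := by
    refine isBoundedUnder_of ⟨M * (M / lam) ^ (p - 1)⁻¹, fun k => ?_⟩
    have hk := hM k (v k) (hvk k)
    rw [integral_inner_smul_powNormSmul_self (by linarith) lam (hvk k).1] at hk ⊢
    exact mul_rpow_le_of_mul_rpow_le_mul hp hlam hM0 lpNorm_nonneg ((le_abs_self _).trans hk)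
  have hΦw {w : Ω → EuclideanSpace ℝ (Fin n)} (hw : MemLp w (ENNReal.ofReal p) μ) :=
    (hw.powNormSmul hpq).const_smul lam
  exact ae_eq_smul_powNormSmul_of_forall_integral_inner_sub_nonneg hpq lam hχ hvl fun w hw =>
    integral_inner_sub_nonneg_of_limsup_le hpq hΦ hvk hΦv hvl hχ hw (hΦw hw) (hψ w hw)
      (hvweak _ (hΦw hw)) hbdd hlimsup
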